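/- Thompson's group F has exponential growth with respect to the generating set {x_0, x_1}. -/
import Mathlib


/-- The defining relations of Thompson's group `F`:
`x_n x_k = x_k x_{n+1}` for `k < n`. -/
def thompsonRels : Set (FreeGroup ℕ) :=
  {r | ∃ n k : ℕ, k < n ∧
    r = FreeGroup.of n * FreeGroup.of k * (FreeGroup.of k * FreeGroup.of (n + 1))⁻¹}

/-- Thompson's group `F`, via its standard infinite presentation. -/
abbrev ThompsonF := PresentedGroup thompsonRels

/-- The generator `x_n` of Thompson's group `F`. -/
noncomputable def x (n : ℕ) : ThompsonF := PresentedGroup.of n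

/-- The ball of radius `n` in the Cayley graph of `F` with respect to `{x_0, x_1}`. -/
def ball (n : ℕ) : Set ThompsonF :=
  {g | ∃ l : List ThompsonF, l.length ≤ n ∧
    (∀ a ∈ l, a = x 0 ∨ a = x 1 ∨ a = (x 0)⁻¹ ∨ a = (x 1)⁻¹) ∧ l.prod = g}

noncomputable section

def gg (a t : ℝ) : ℝ := if t ≤ a then t else if t ≤ a + 2 then (t + a) / 2 else t - 1
def ggInv (a t : ℝ) : ℝ := if t ≤ a then t else if t ≤ a + 1 then 2 * t - a else t + 1

def G (a : ℝ) : Equiv.Perm ℝ where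
  toFun := gg a
  invFun := ggInv a
  left_inv := by intro t; unfold gg ggInv; split_ifs <;> linarith
  right_inv := by intro t; unfold gg ggInv; split_ifs <;> linarith

lemma gg_rel {k n : ℝ} (h : k + 1 ≤ n) (t : ℝ) :
    gg n (gg k t) = gg k (gg (n + 1) t) := by
  unfold gg; split_ifs <;> linarith

lemma G_rel {k n : ℝ} (h : k + 1 ≤ n) : G n * G k = G k * G (n + 1) := by
  ext t; exact gg_rel h t

lemma rels_hold : ∀ r ∈ thompsonRels, FreeGroup.lift (fun n : ℕ => G n) r = 1 := by
  rintro r ⟨n, k, hkn, rfl⟩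
  have h : (k : ℝ) + 1 ≤ (n : ℝ) := by exact_mod_cast hkn
  simp only [map_mul, map_inv, FreeGroup.lift_apply_of]
  rw [mul_inv_eq_one]
  push_cast
  exact G_rel h

def φ : ThompsonF →* Equiv.Perm ℝ := PresentedGroup.toGroup rels_hold

lemma φ_x (n : ℕ) : φ (x n) = G n := PresentedGroup.toGroup.of rels_hold

-- ping pong elements
def uP : Equiv.Perm ℝ := (G 0)⁻¹ * G 1
def vP : Equiv.Perm ℝ := G 1

lemma vP_mem {t : ℝ} (h1 : 1 < t) (h3 : t < 3) : 1 < vP t ∧ vP t < 2 := by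
  show 1 < gg 1 t ∧ gg 1 t < 2
  unfold gg; split_ifs <;> constructor <;> linarith

lemma uP_mem {t : ℝ} (h1 : 1 < t) (h3 : t < 3) : 2 < uP t ∧ uP t < 3 := by
  show 2 < ggInv 0 (gg 1 t) ∧ ggInv 0 (gg 1 t) < 3
  unfold gg ggInv; split_ifs <;> constructor <;> linarith

def PW (b : Bool) : Equiv.Perm ℝ := if b then uP else vP
def Psi (l : List Bool) : Equiv.Perm ℝ := (l.map PW).prod

lemma Psi_cons (b : Bool) (l : List Bool) : Psi (b :: l) = PW b * Psi l := by
  simp [Psi]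

lemma Psi_mem (l : List Bool) {t : ℝ} (h1 : 1 < t) (h3 : t < 3) :
    1 < Psi l t ∧ Psi l t < 3 := by
  induction l with
  | nil => exact ⟨h1, h3⟩
  | cons b l ih =>
    rw [Psi_cons]
    have h := ih
    cases b
    · have h2 := vP_mem h.1 h.2
      exact ⟨by simpa [Equiv.Perm.mul_apply, PW] using h2.1,
             by have := h2.2; simp only [Equiv.Perm.mul_apply, PW]; simp; linarith⟩
    · have h2 := uP_mem h.1 h.2
      exact ⟨by have := h2.1; simp only [Equiv.Perm.mul_apply, PW]; simp; linarith,
             by simpa [Equiv.Perm.mul_apply, PW] using h2.2⟩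

lemma Psi_inj : ∀ l1 l2 : List Bool, l1.length = l2.length → Psi l1 = Psi l2 → l1 = l2 := by
  intro l1
  induction l1 with
  | nil => intro l2 h _; cases l2 with
    | nil => rfl
    | cons b l => simp at h
  | cons b1 l1 ih =>
    intro l2 hlen heq
    cases l2 with
    | nil => simp at hlen
    | cons b2 l2 =>
      have hlen' : l1.length = l2.length := by simpa using hlen
      rw [Psi_cons, Psi_cons] at heq
      have m1 := Psi_mem l1 (t := 2) (by norm_num) (by norm_num)
      have m2 := Psi_mem l2 (t := 2) (by norm_num) (by norm_num)
      have happ : PW b1 (Psi l1 2) = PW b2 (Psi l2 2) := by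
        have := DFunLike.congr_fun heq (2 : ℝ)
        simpa [Equiv.Perm.mul_apply] using this
      have hb : b1 = b2 := by
        cases b1 <;> cases b2
        · rfl
        · exfalso
          have a1 := vP_mem m1.1 m1.2
          have a2 := uP_mem m2.1 m2.2
          rw [show PW true = uP from rfl, show PW false = vP from rfl] at happ
          linarith
        · exfalso
          have a1 := uP_mem m1.1 m1.2
          have a2 := vP_mem m2.1 m2.2
          rw [show PW true = uP from rfl, show PW false = vP from rfl] at happ
          linarith
        · rfl
      subst hb
      have : Psi l1 = Psi l2 := mul_left_cancel heq
      rw [ih l2 hlen' this]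

-- Thompson-level words
def W (b : Bool) : ThompsonF := if b then (x 0)⁻¹ * x 1 else x 1
def P (l : List Bool) : ThompsonF := (l.map W).prod

lemma phi_W (b : Bool) : φ (W b) = PW b := by
  cases b
  · show φ (x 1) = vP
    rw [φ_x]; simp [vP]
  · show φ ((x 0)⁻¹ * x 1) = uP
    rw [map_mul, map_inv, φ_x, φ_x]; simp [uP]

lemma phi_P (l : List Bool) : φ (P l) = Psi l := by
  unfold P Psi
  rw [map_list_prod, List.map_map]
  congr 1
  exact List.map_congr_left fun b _ => phi_W b

lemma P_inj (l1 l2 : List Bool) (h : l1.length = l2.length) (he : P l1 = P l2) : l1 = l2 :=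
  Psi_inj l1 l2 h (by rw [← phi_P, ← phi_P, he])

lemma P_mem_ball (l : List Bool) : P l ∈ ball (2 * l.length) := by
  induction l with
  | nil => exact ⟨[], by simp, by simp, by simp [P]⟩
  | cons b l ih =>
    obtain ⟨L, hL1, hL2, hL3⟩ := ih
    refine ⟨(if b then [(x 0)⁻¹, x 1] else [x 1]) ++ L, ?_, ?_, ?_⟩
    · cases b <;> simp at hL1 ⊢ <;> omega
    · intro a ha
      rcases List.mem_append.1 ha with h | h
      · cases b <;> simp at h
        · subst h; tauto
        · rcases h with h | h <;> subst h <;> tauto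
      · exact hL2 a h
    · rw [List.prod_append, hL3]
      show _ = P (b :: l)
      unfold P
      rw [List.map_cons, List.prod_cons]
      cases b <;> simp [W]

lemma ball_mono {m n : ℕ} (h : m ≤ n) : ball m ⊆ ball n := by
  rintro g ⟨L, h1, h2, h3⟩
  exact ⟨L, h1.trans h, h2, h3⟩

lemma ball_finite (n : ℕ) : (ball n).Finite := by
  classical
  set S : Set ThompsonF := {x 0, x 1, (x 0)⁻¹, (x 1)⁻¹} with hS
  have hSfin : S.Finite := Set.Finite.insert _ (Set.Finite.insert _ (Set.Finite.insert _ (Set.finite_singleton _)))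
  haveI := hSfin.to_subtype
  have key : ball n ⊆ (fun l : List ↥S => (l.map Subtype.val).prod) '' {l | l.length ≤ n} := by
    rintro g ⟨L, h1, h2, rfl⟩
    refine ⟨L.attach.map (fun a => ⟨a.1, ?_⟩), ?_, ?_⟩
    · rcases h2 a.1 a.2 with h | h | h | h <;> rw [h] <;> simp [hS]
    · simpa using h1
    · simp only [List.map_map]
      show (L.attach.map (fun a => a.1)).prod = L.prod
      rw [List.attach_map_subtype_val]
  exact ((List.finite_length_le ↥S n).image _).subset key

lemma card_ball_ge (n : ℕ) : 2 ^ (n / 2) ≤ Nat.card (ball n) := by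
  haveI : Finite ↥(ball n) := (ball_finite n).to_subtype
  set m := n / 2 with hm
  have hmem : ∀ v : List.Vector Bool m, P v.toList ∈ ball n := by
    intro v
    have h1 := P_mem_ball v.toList
    rw [v.toList_length] at h1
    exact ball_mono (by omega) h1
  have inj : Function.Injective (fun v : List.Vector Bool m =>
      (⟨P v.toList, hmem v⟩ : ↥(ball n))) := by
    intro v1 v2 h
    have h' : P v1.toList = P v2.toList := congrArg Subtype.val h
    have := P_inj _ _ (by rw [v1.toList_length, v2.toList_length]) h'
    exact List.Vector.toList_injective this
  calc 2 ^ m = Nat.card (List.Vector Bool m) := by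
        rw [Nat.card_eq_fintype_card, card_vector]; simp
    _ ≤ Nat.card (ball n) := Nat.card_le_card_of_injective _ inj

lemma x1_ne_one : x 1 ≠ 1 := by
  intro h
  have h2 := congrArg φ h
  rw [φ_x, map_one] at h2
  have h3 := DFunLike.congr_fun h2 (2 : ℝ)
  have : gg ((1:ℕ):ℝ) 2 = 2 := h3
  norm_num [gg] at this

lemma card_ball_one : 2 ≤ Nat.card (ball 1) := by
  haveI : Finite ↥(ball 1) := (ball_finite 1).to_subtype
  have h1 : (1 : ThompsonF) ∈ ball 1 := ⟨[], by simp, by simp, by simp⟩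
  have hx : x 1 ∈ ball 1 := ⟨[x 1], by simp, by simp, by simp⟩
  have inj : Function.Injective (fun b : Bool =>
      (⟨if b then x 1 else 1, by cases b <;> simpa⟩ : ↥(ball 1))) := by
    intro b1 b2 h
    have h' := congrArg Subtype.val h
    cases b1 <;> cases b2 <;> simp at h' ⊢
    · exact x1_ne_one h'.symm
    · exact x1_ne_one h'
  calc 2 = Nat.card Bool := by simp
    _ ≤ Nat.card (ball 1) := Nat.card_le_card_of_injective _ inj


/-- Thompson's group `F` has exponential growth with respect to `{x_0, x_1}`. -/
theorem thompsonF_exponential_growth :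
    ∃ c : ℝ, 1 < c ∧ ∀ n : ℕ, c ^ n ≤ (Nat.card (ball n) : ℝ) := by
  refine ⟨(2 : ℝ) ^ ((4 : ℝ)⁻¹), ?_, ?_⟩
  · rw [Real.one_lt_rpow_iff_of_pos (by norm_num)]
    norm_num
  · intro n
    have hpow : ((2 : ℝ) ^ ((4 : ℝ)⁻¹)) ^ n = (2 : ℝ) ^ ((n : ℝ) * 4⁻¹) := by
      rw [← Real.rpow_natCast ((2:ℝ) ^ ((4:ℝ)⁻¹)) n, ← Real.rpow_mul (by norm_num)]
      ring_nf
    rcases eq_or_ne n 1 with rfl | hn1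
    · have : ((2 : ℝ) ^ ((4 : ℝ)⁻¹)) ^ 1 ≤ 2 := by
        rw [pow_one]
        calc (2:ℝ) ^ ((4:ℝ)⁻¹) ≤ (2:ℝ) ^ (1:ℝ) :=
              Real.rpow_le_rpow_of_exponent_le (by norm_num) (by norm_num)
          _ = 2 := Real.rpow_one 2
      have h2 : (2 : ℝ) ≤ (Nat.card (ball 1) : ℝ) := by exact_mod_cast card_ball_one
      linarith
    · have hle : (n : ℝ) * 4⁻¹ ≤ ((n / 2 : ℕ) : ℝ) := by
        have : n ≤ 4 * (n / 2) := by omega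
        have h4 : (n : ℝ) ≤ 4 * ((n / 2 : ℕ) : ℝ) := by exact_mod_cast this
        linarith
      have hcard : ((2 : ℕ) ^ (n / 2) : ℝ) ≤ (Nat.card (ball n) : ℝ) := by
        exact_mod_cast card_ball_ge n
      calc ((2 : ℝ) ^ ((4 : ℝ)⁻¹)) ^ n = (2 : ℝ) ^ ((n : ℝ) * 4⁻¹) := hpow
        _ ≤ (2 : ℝ) ^ (((n / 2 : ℕ) : ℝ)) :=
              Real.rpow_le_rpow_of_exponent_le (by norm_num) hle
        _ = ((2 : ℕ) ^ (n / 2) : ℝ) := by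
              rw [Real.rpow_natCast]; norm_num
        _ ≤ _ := hcard
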